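/- arXiv:0909.2571 — 3 statements merged into one kernel-verified Lean document; each statement's English description precedes it below -/
import Mathlib

section
/- Let T be a continuous bundle random dynamical system on E over (Ω,F,P,ϑ). Fix x ∈ X_E, k,n ∈ ℕ with k ≥ n and ε > 0, and let s_n(ω,ε) denote the largest cardinality of an (ω,n,ε)-separated subset of (T_ω^k)^{-1}x, and for l ≥ 1 let t_{n,l}(ω,ε) = max{q : there exist x_1,…,x_q ∈ (T_ω^k)^{-1}x with d_n^ω(x_i,x_j) ≥ ε + 1/l for all i ≠ j}. Then each t_{n,l}(·,ε) is measurable in ω, s_n(·,ε) is measurable in ω, t_{n,l}(ω,ε) increases to s_n(ω,ε) as l → ∞, and for each ω one has t_{n,l}(ω,ε) = s_n(ω,ε) for all l large enough. -/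
/-! For `q : ℕ`, the set `{ω | q ≤ s_n(ω,ε)}` is the projection to `Ω` of the measurable set of
pairs `(ω, v)` where `v : Fin q → X` is an injective tuple in `(T_ω^k)⁻¹x` with pairwise
`d_n^ω`-distances in `(ε, ∞)`; likewise for `t_{n,l}` with `[ε + 1/l, ∞)`. Since `F` is complete and
countably generated, such projections are measurable: through `ω ↦ (1_{A_i}(ω))_i` they are
preimages of analytic subsets of the Cantor space, and analytic sets are null measurable, being
approximated from inside by compact sets. All cardinalities are bounded because `d_n^ω` is the sup
metric of the orbit map `X → X^n`, and `X^n` is compact. Finally, a maximal `(ω,n,ε)`-separated set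
is finite, so its pairwise distances exceed `ε` by some margin, and `t_{n,l}(ω,ε) = s_n(ω,ε)` as
soon as `1/l` is below that margin. -/

open MeasureTheory Filter Set

namespace PreImageRDS

variable {Ω : Type} [MeasurableSpace Ω] {X : Type} [MetricSpace X] [CompactSpace X]
  [MeasurableSpace X] [BorelSpace X]

/-- The fiber `E_ω = {x : (ω, x) ∈ E}`. -/
def fiber (E : Set (Ω × X)) (ω : Ω) : Set X := {x | (ω, x) ∈ E}

/-- `X_E = {x : (ω, x) ∈ E for some ω}`. -/
def XE (E : Set (Ω × X)) : Set X := {x | ∃ ω, (ω, x) ∈ E}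

/-- The iterates `T_ω^n = T_{ϑ^{n-1}ω} ∘ ⋯ ∘ T_{ϑω} ∘ T_ω`. -/
def Tn (ϑ : Ω → Ω) (T : Ω → X → X) : ℕ → Ω → X → X
  | 0 => fun _ x => x
  | n + 1 => fun ω x => Tn ϑ T n (ϑ ω) (T ω x)

/-- The skew product `Θ(ω,x) = (ϑω, T_ω x)`. -/
def skew (ϑ : Ω → Ω) (T : Ω → X → X) : Ω × X → Ω × X := fun p => (ϑ p.1, T p.1 p.2)

/-- The Bowen metric `d_n^ω(y,z) = max_{0 ≤ i < n} d(T_ω^i y, T_ω^i z)`. -/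
noncomputable def dn (ϑ : Ω → Ω) (T : Ω → X → X) (n : ℕ) (ω : Ω) (y z : X) : ℝ :=
  ((Finset.range n).sup fun i => nndist (Tn ϑ T i ω y) (Tn ϑ T i ω z) : NNReal)

/-- `F` is `(ω,n,ε)`-separated. -/
def IsSep (ϑ : Ω → Ω) (T : Ω → X → X) (n : ℕ) (ε : ℝ) (ω : Ω) (F : Set X) : Prop :=
  ∀ y ∈ F, ∀ z ∈ F, y ≠ z → ε < dn ϑ T n ω y z

/-- The pre-image fiber `(T_ω^k)^{-1} x ⊆ E_ω`. -/
def preFiber (ϑ : Ω → Ω) (T : Ω → X → X) (E : Set (Ω × X)) (k : ℕ) (x : X) (ω : Ω) :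
    Set X :=
  {y ∈ fiber E ω | Tn ϑ T k ω y = x}

/-- The Birkhoff sum `S_n f(ω,y) = ∑_{i<n} f(ϑ^i ω, T_ω^i y)`. -/
noncomputable def Snf (ϑ : Ω → Ω) (T : Ω → X → X) (f : Ω → X → ℝ) (n : ℕ) (ω : Ω)
    (y : X) : ℝ :=
  ∑ i ∈ Finset.range n, f (ϑ^[i] ω) (Tn ϑ T i ω y)

/-- `P_{pre,n,ω}(T,f,ε,(T_ω^k)^{-1}x)`. -/
noncomputable def PpreN (ϑ : Ω → Ω) (T : Ω → X → X) (E : Set (Ω × X)) (f : Ω → X → ℝ)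
    (n k : ℕ) (ε : ℝ) (x : X) (ω : Ω) : ℝ :=
  sSup {r : ℝ | ∃ F : Finset X, ↑F ⊆ preFiber ϑ T E k x ω ∧ IsSep ϑ T n ε ω ↑F ∧
    r = ∑ y ∈ F, Real.exp (Snf ϑ T f n ω y)}

/-- `P_pre(T,f,ε)`. -/
noncomputable def PpreEps (P : Measure Ω) (ϑ : Ω → Ω) (T : Ω → X → X) (E : Set (Ω × X))
    (f : Ω → X → ℝ) (ε : ℝ) : ℝ :=
  limsup (fun n : ℕ => (1 / (n : ℝ)) *
    sSup {r : ℝ | ∃ k ≥ n, ∃ x ∈ XE E,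
      r = ∫ ω, Real.log (PpreN ϑ T E f n k ε x ω) ∂P}) atTop

/-- The pre-image topological pressure `P_pre(T,f) = lim_{ε→0} P_pre(T,f,ε)
    (`= sup_{ε>0} P_pre(T,f,ε)` by monotonicity in `ε`). -/
noncomputable def Ppre (P : Measure Ω) (ϑ : Ω → Ω) (T : Ω → X → X) (E : Set (Ω × X))
    (f : Ω → X → ℝ) : ℝ :=
  sSup {r : ℝ | ∃ ε > (0 : ℝ), r = PpreEps P ϑ T E f ε}

/-- The σ-algebra `F_E` (sets depending only on ω). -/
def mF (Ω X : Type) [MeasurableSpace Ω] [MeasurableSpace X] : MeasurableSpace (Ω × X) :=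
  MeasurableSpace.comap Prod.fst inferInstance

/-- The σ-algebra `(F×B)^-_E = ⋂_{n ≥ 0} Θ^{-n}(F×B)_E`. -/
def mMinus (ϑ : Ω → Ω) (T : Ω → X → X) : MeasurableSpace (Ω × X) :=
  ⨅ n : ℕ, MeasurableSpace.comap ((skew ϑ T)^[n]) inferInstance

/-- The fiberwise σ-algebra `B^-_ω = ⋂_{n ≥ 0}(T_ω^n)^{-1} B_{ϑ^n ω}`. -/
def mMinusFiber (ϑ : Ω → Ω) (T : Ω → X → X) (ω : Ω) : MeasurableSpace X :=
  ⨅ n : ℕ, MeasurableSpace.comap (Tn ϑ T n ω) inferInstance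

/-- Conditional entropy `H_μ(Q | m)` of a finite family of sets given a σ-algebra `m`,
    via conditional expectations of indicators. -/
noncomputable def condEntropyFam {α : Type} [MeasurableSpace α] (μ : Measure α)
    (m : MeasurableSpace α) {ι : Type} [Fintype ι] (Q : ι → Set α) : ℝ :=
  - ∫ a, ∑ i, ((μ[(Q i).indicator (fun _ => (1 : ℝ)) | m]) a) *
      Real.log ((μ[(Q i).indicator (fun _ => (1 : ℝ)) | m]) a) ∂μ

/-- `Q` is a finite measurable partition of `E`. -/
def IsFinPart {α : Type} [MeasurableSpace α] {ι : Type} [Fintype ι] (Q : ι → Set α)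
    (E : Set α) : Prop :=
  (∀ i, MeasurableSet (Q i)) ∧ (∀ i j, i ≠ j → Disjoint (Q i) (Q j)) ∧ (⋃ i, Q i) = E

/-- `h^{(r)}_{pre,μ}(T,Q) = lim_n (1/n) H_μ(⋁_{i<n} Θ^{-i}Q | F_E ∨ (F×B)^-_E)`. -/
noncomputable def hPrePart (ϑ : Ω → Ω) (T : Ω → X → X) (μ : Measure (Ω × X))
    {N : ℕ} (Q : Fin N → Set (Ω × X)) : ℝ :=
  limsup (fun n : ℕ => (1 / (n : ℝ)) * condEntropyFam μ (mF Ω X ⊔ mMinus ϑ T)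
    (fun j : Fin n → Fin N => ⋂ i : Fin n, (skew ϑ T)^[(i : ℕ)] ⁻¹' Q (j i))) atTop

/-- The pre-image measure-theoretic entropy `h^{(r)}_{pre,μ}(T)`. -/
noncomputable def hPre (ϑ : Ω → Ω) (T : Ω → X → X) (E : Set (Ω × X))
    (μ : Measure (Ω × X)) : ℝ :=
  sSup {h : ℝ | ∃ (N : ℕ) (Q : Fin N → Set (Ω × X)), IsFinPart Q E ∧
    h = hPrePart ϑ T μ Q}

/-- `μ ∈ M^1_P(E,T)`: a Θ-invariant probability measure on `E` with marginal `P`. -/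
def IsPInv (P : Measure Ω) (ϑ : Ω → Ω) (T : Ω → X → X) (E : Set (Ω × X))
    (μ : Measure (Ω × X)) : Prop :=
  IsProbabilityMeasure μ ∧ μ E = 1 ∧ μ.map Prod.fst = P ∧ μ.map (skew ϑ T) = μ


/-- `s_n(ω,ε)`: the largest cardinality of an `(ω,n,ε)`-separated subset of
    the pre-image fiber `(T_ω^k)^{-1}x`. -/
noncomputable def sepMaxCard (ϑ : Ω → Ω) (T : Ω → X → X) (E : Set (Ω × X))
    (n k : ℕ) (ε : ℝ) (x : X) (ω : Ω) : ℕ :=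
  sSup {q : ℕ | ∃ F : Finset X, ↑F ⊆ preFiber ϑ T E k x ω ∧ IsSep ϑ T n ε ω ↑F ∧
    F.card = q}

/-- `t_{n,l}(ω,ε)`: the largest `q` such that there exist `x₁,…,x_q` in `(T_ω^k)^{-1}x`
    with `d_n^ω(x_i,x_j) ≥ ε + 1/l` for `i ≠ j`. -/
noncomputable def sepMaxCardGe (ϑ : Ω → Ω) (T : Ω → X → X) (E : Set (Ω × X))
    (n k : ℕ) (ε : ℝ) (l : ℕ) (x : X) (ω : Ω) : ℕ :=
  sSup {q : ℕ | ∃ F : Finset X, ↑F ⊆ preFiber ϑ T E k x ω ∧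
    (∀ y ∈ F, ∀ z ∈ F, y ≠ z → ε + 1 / (l : ℝ) ≤ dn ϑ T n ω y z) ∧ F.card = q}


end PreImageRDS

open Topology

def prefixBounded (b : ℕ → ℕ) (k : ℕ) : Set (ℕ → ℕ) := {x | ∀ i < k, x i ≤ b i}

lemma antitone_prefixBounded (b : ℕ → ℕ) : Antitone (prefixBounded b) :=
  fun _ _ hkl _ hx i hi => hx i (hi.trans_le hkl)

lemma prefixBounded_congr {b b' : ℕ → ℕ} {k : ℕ} (h : ∀ i < k, b i = b' i) :
    prefixBounded b k = prefixBounded b' k := by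
  ext x
  exact forall₂_congr fun i hi => by rw [h i hi]

lemma prefixBounded_eq_iUnion_update (b : ℕ → ℕ) (k : ℕ) :
    prefixBounded b k = ⋃ m, prefixBounded (Function.update b k m) (k + 1) := by
  ext x
  simp only [prefixBounded, mem_iUnion, mem_ofPred_eq, Nat.lt_succ_iff_lt_or_eq]
  constructor
  · refine fun hx => ⟨x k, fun i hi => ?_⟩
    rcases hi with hi | rfl
    · simpa [hi.ne] using hx i hi
    · simp
  · rintro ⟨m, hm⟩ i hi
    simpa [hi.ne] using hm i (.inl hi)

lemma monotone_prefixBounded_update (b : ℕ → ℕ) (k : ℕ) :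
    Monotone fun m => prefixBounded (Function.update b k m) (k + 1) := by
  intro m m' hmm' x hx i hi
  rcases eq_or_ne i k with rfl | hik
  · simpa using (by simpa using hx i hi : x i ≤ m).trans hmm'
  · simpa [hik] using hx i hi

/-- Points `u k ∈ prefixBounded b k` all lie in the compact box `∏ i, [0, max (b i) (u 0 i, …,
u i i)]`, so a subsequence converges, and its limit lies in `∏ i, [0, b i]`. -/
lemma iInter_closure_image_prefixBounded_subset {Z : Type*} [TopologicalSpace Z] [T2Space Z]
    [FirstCountableTopology Z] {f : (ℕ → ℕ) → Z} (hf : Continuous f) (b : ℕ → ℕ) :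
    ⋂ k, closure (f '' prefixBounded b k) ⊆ f '' univ.pi fun i => Iic (b i) := by
  intro z hz
  obtain ⟨V, hV⟩ := (𝓝 z).exists_antitone_basis
  have hu : ∀ k, ∃ u ∈ prefixBounded b k, f u ∈ V k := fun k => by
    obtain ⟨_, hw, u, hu, rfl⟩ := mem_closure_iff_nhds.mp (mem_iInter.mp hz k) _ (hV.mem k)
    exact ⟨u, hu, hw⟩
  choose u hub hufV using hu
  let B : ℕ → ℕ := fun i => max (b i) ((Finset.range (i + 1)).sup fun k => u k i)
  have huB : ∀ k, u k ∈ univ.pi fun i => Iic (B i) := fun k i _ => by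
    rcases lt_or_ge i k with hik | hki
    · exact le_max_of_le_left (hub k i hik)
    · exact le_max_of_le_right
        (Finset.le_sup (f := fun k => u k i) (Finset.mem_range.mpr (Nat.lt_succ_of_le hki)))
  obtain ⟨y, -, φ, hφ, hy⟩ :=
    (isCompact_univ_pi fun i => (finite_Iic (B i)).isCompact).tendsto_subseq huB
  refine ⟨y, fun i _ => ?_, ?_⟩
  · refine (isClosed_le (continuous_apply i) continuous_const).mem_of_tendsto hy
      (eventually_atTop.mpr ⟨i + 1, fun j hj => ?_⟩)
    exact hub (φ j) i ((Nat.lt_succ_self i).trans_le (hj.trans (hφ.id_le j)))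
  · exact tendsto_nhds_unique ((hf.tendsto y).comp hy)
      ((hV.tendsto hufV).comp hφ.tendsto_atTop)

namespace MeasureTheory

variable {Z : Type*} [MeasurableSpace Z] (μ : Measure Z) [IsFiniteMeasure μ]

lemma exists_measure_image_prefixBounded_le_update (f : (ℕ → ℕ) → Z) (b : ℕ → ℕ)
    (k : ℕ) {δ : ENNReal} (hδ : δ ≠ 0) :
    ∃ m, μ (f '' prefixBounded b k) ≤
      μ (f '' prefixBounded (Function.update b k m) (k + 1)) + δ := by
  have hsup : μ (f '' prefixBounded b k) =
      ⨆ m, μ (f '' prefixBounded (Function.update b k m) (k + 1)) := by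
    rw [prefixBounded_eq_iUnion_update, image_iUnion]
    exact (monotone_image.comp (monotone_prefixBounded_update b k)).directed_le.measure_iUnion
  have hlt : μ (f '' prefixBounded b k) <
      ⨆ m, (μ (f '' prefixBounded (Function.update b k m) (k + 1)) + δ) := by
    rw [← ENNReal.iSup_add, ← hsup]
    exact ENNReal.lt_add_right (measure_ne_top μ _) hδ
  obtain ⟨m, hm⟩ := lt_iSup_iff.mp hlt
  exact ⟨m, hm.le⟩

/-- The bounds are chosen one coordinate at a time, `b k` losing at most `δ k` of measure;
`p k` holds the first `k` of them. -/
lemma exists_measure_range_le_image_prefixBounded_add (f : (ℕ → ℕ) → Z)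
    {δ : ℕ → ENNReal} (hδ : ∀ k, δ k ≠ 0) :
    ∃ b : ℕ → ℕ, ∀ k,
      μ (range f) ≤ μ (f '' prefixBounded b k) + ∑ i ∈ Finset.range k, δ i := by
  choose next hnext using fun b k => exists_measure_image_prefixBounded_le_update μ f b k (hδ k)
  let p : ℕ → ℕ → ℕ := fun k =>
    Nat.rec (fun _ => 0) (fun k pk => Function.update pk k (next pk k)) k
  have hp : ∀ k, p (k + 1) = Function.update (p k) k (next (p k) k) := fun k => rfl
  have hp_stable : ∀ k i, i < k → p k i = p (i + 1) i := by
    intro k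
    induction k with
    | zero => intro i hi; omega
    | succ k ih =>
      intro i hi
      rcases Nat.lt_succ_iff_lt_or_eq.mp hi with hi | rfl
      · rw [hp k, Function.update_of_ne hi.ne, ih i hi]
      · rfl
  refine ⟨fun i => p (i + 1) i, fun k => ?_⟩
  rw [prefixBounded_congr fun i hi => (hp_stable k i hi).symm]
  induction k with
  | zero => simp [prefixBounded]
  | succ k ih =>
    calc μ (range f) ≤ μ (f '' prefixBounded (p k) k) + ∑ i ∈ Finset.range k, δ i := ih
      _ ≤ μ (f '' prefixBounded (p (k + 1)) (k + 1)) + δ k + ∑ i ∈ Finset.range k, δ i := by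
        gcongr; exact hnext (p k) k
      _ = _ := by rw [Finset.sum_range_succ]; ring

variable [TopologicalSpace Z] [T2Space Z] [FirstCountableTopology Z] [OpensMeasurableSpace Z]

lemma exists_isCompact_subset_range_measure_le_add {f : (ℕ → ℕ) → Z} (hf : Continuous f)
    {ε : ENNReal} (hε : ε ≠ 0) :
    ∃ K, IsCompact K ∧ K ⊆ range f ∧ μ (range f) ≤ μ K + ε := by
  obtain ⟨δ, hδpos, hδε⟩ := ENNReal.exists_pos_sum_of_countable' hε ℕ
  obtain ⟨b, hb⟩ := exists_measure_range_le_image_prefixBounded_add μ f fun k => (hδpos k).ne'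
  let C : ℕ → Set Z := fun k => closure (f '' prefixBounded b k)
  have hC : μ (⋂ k, C k) = ⨅ k, μ (C k) :=
    Antitone.measure_iInter
      (fun _ _ hkl => closure_mono (image_mono (antitone_prefixBounded b hkl)))
      (fun _ => isClosed_closure.nullMeasurableSet) ⟨0, measure_ne_top μ _⟩
  refine ⟨_, (isCompact_univ_pi fun i => (finite_Iic (b i)).isCompact).image hf,
    image_subset_range _ _, ?_⟩
  calc μ (range f) ≤ μ (⋂ k, C k) + ε := by
        rw [hC, ENNReal.iInf_add]
        refine le_iInf fun k => (hb k).trans (add_le_add (measure_mono subset_closure) ?_)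
        exact (ENNReal.sum_le_tsum _).trans hδε.le
    _ ≤ μ (f '' univ.pi fun i => Iic (b i)) + ε := by
        gcongr; exact iInter_closure_image_prefixBounded_subset hf b

lemma AnalyticSet.exists_isCompact_subset_measure_le_add {S : Set Z} (hS : AnalyticSet S)
    {ε : ENNReal} (hε : ε ≠ 0) :
    ∃ K, IsCompact K ∧ K ⊆ S ∧ μ S ≤ μ K + ε := by
  rw [AnalyticSet] at hS
  rcases hS with rfl | ⟨f, hf, rfl⟩
  · exact ⟨∅, isCompact_empty, subset_rfl, by simp⟩
  · exact exists_isCompact_subset_range_measure_le_add μ hf hε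

lemma AnalyticSet.nullMeasurableSet {S : Set Z} (hS : AnalyticSet S) :
    NullMeasurableSet S μ := by
  choose K hK hKS hSK using fun n : ℕ => hS.exists_isCompact_subset_measure_le_add μ
    (ENNReal.inv_ne_zero.mpr (ENNReal.natCast_ne_top n))
  have hV : MeasurableSet (⋃ n, K n) := .iUnion fun n => (hK n).isClosed.measurableSet
  have hVS : ⋃ n, K n ⊆ S := iUnion_subset hKS
  have hμ : μ S ≤ μ (⋃ n, K n) := by
    refine ENNReal.le_of_forall_pos_le_add fun δ hδ _ => ?_
    obtain ⟨n, hn⟩ := ENNReal.exists_inv_nat_lt (a := δ) (by exact_mod_cast hδ.ne')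
    exact (hSK n).trans (add_le_add (measure_mono (subset_iUnion K n)) hn.le)
  have hnull : μ (S \ ⋃ n, K n) = 0 := by
    rw [measure_sdiff hVS hV.nullMeasurableSet (measure_ne_top μ _)]
    exact tsub_eq_zero_of_le hμ
  rw [← union_sdiff_cancel hVS]
  exact hV.nullMeasurableSet.union (.of_null hnull)

end MeasureTheory

lemma MeasurableSpace.comap_mapNatBool (α : Type*) [m : MeasurableSpace α]
    [CountablyGenerated α] : MeasurableSpace.comap (mapNatBool α) MeasurableSpace.pi = m := by
  refine le_antisymm (measurable_mapNatBool α).comap_le ?_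
  conv_lhs => rw [← generateFrom_natGeneratingSequence α]
  refine generateFrom_le ?_
  rintro _ ⟨n, rfl⟩
  refine ⟨{y | y n = true}, measurableSet_eq_fun (measurable_pi_apply n) measurable_const, ?_⟩
  ext ω
  simp [mapNatBool]

/-- Pull back along `mapNatBool` to the Cantor space, where the projection is an analytic set. -/
theorem MeasureTheory.Measure.measurableSet_image_fst {Ω Y : Type*} [MeasurableSpace Ω]
    [MeasurableSpace.CountablyGenerated Ω] (μ : Measure Ω) [IsFiniteMeasure μ] [μ.IsComplete]
    [TopologicalSpace Y] [PolishSpace Y] [MeasurableSpace Y] [BorelSpace Y]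
    {A : Set (Ω × Y)} (hA : MeasurableSet A) : MeasurableSet (Prod.fst '' A) := by
  let g := MeasurableSpace.mapNatBool Ω
  have hg : Measurable g := MeasurableSpace.measurable_mapNatBool Ω
  have hle : (Prod.instMeasurableSpace : MeasurableSpace (Ω × Y)) ≤
      MeasurableSpace.comap (Prod.map g id) Prod.instMeasurableSpace := by
    rw [Prod.instMeasurableSpace, Prod.instMeasurableSpace, MeasurableSpace.comap_prodMap,
      MeasurableSpace.comap_mapNatBool, MeasurableSpace.comap_id]
  obtain ⟨A', hA', rfl⟩ := MeasurableSpace.measurableSet_comap.mp (hle A hA)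
  have : PolishSpace (ℕ → Bool) := {}
  have hproj : Prod.fst '' (Prod.map g id ⁻¹' A') = g ⁻¹' (Prod.fst '' A') := by
    ext ω; simp [g]
  rw [hproj]
  exact ((hA'.analyticSet.image_of_continuous continuous_fst).nullMeasurableSet
    (μ.map g)).preimage (hg.quasiMeasurePreserving μ) |>.measurable_of_complete

section PairwiseCards

variable {Y : Type*}

def pairwiseCards (A : Set Y) (r : Y → Y → Prop) : Set ℕ :=
  {q | ∃ F : Finset Y, ↑F ⊆ A ∧ (∀ y ∈ F, ∀ z ∈ F, y ≠ z → r y z) ∧ F.card = q}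

variable {A : Set Y} {r r' : Y → Y → Prop} {q : ℕ}

lemma zero_mem_pairwiseCards : 0 ∈ pairwiseCards A r :=
  ⟨∅, by simp, by simp, rfl⟩

lemma pairwiseCards_mono (h : ∀ y z, r y z → r' y z) :
    pairwiseCards A r ⊆ pairwiseCards A r' :=
  fun _ ⟨F, hFA, hF, hq⟩ => ⟨F, hFA, fun y hy z hz hyz => h y z (hF y hy z hz hyz), hq⟩

lemma sSup_pairwiseCards_mono (hbdd : BddAbove (pairwiseCards A r'))
    (h : ∀ y z, r y z → r' y z) : sSup (pairwiseCards A r) ≤ sSup (pairwiseCards A r') :=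
  csSup_le_csSup hbdd ⟨0, zero_mem_pairwiseCards⟩ (pairwiseCards_mono h)

lemma le_sSup_pairwiseCards_iff (hbdd : BddAbove (pairwiseCards A r)) :
    q ≤ sSup (pairwiseCards A r) ↔ q ∈ pairwiseCards A r := by
  refine ⟨fun hq => ?_, fun hq => le_csSup hbdd hq⟩
  obtain ⟨F, hFA, hF, hcard⟩ := Nat.sSup_mem ⟨0, zero_mem_pairwiseCards⟩ hbdd
  obtain ⟨F', hF'F, rfl⟩ := Finset.exists_subset_card_eq (hcard ▸ hq)
  exact ⟨F', (Finset.coe_subset.mpr hF'F).trans hFA,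
    fun y hy z hz => hF y (hF'F hy) z (hF'F hz), rfl⟩

lemma mem_pairwiseCards_iff_exists_fin (hr : ∀ y, ¬ r y y) :
    q ∈ pairwiseCards A r ↔
      ∃ v : Fin q → Y, (∀ i, v i ∈ A) ∧ ∀ i j, i ≠ j → r (v i) (v j) := by
  classical
  constructor
  · rintro ⟨F, hFA, hF, rfl⟩
    refine ⟨fun i => F.equivFin.symm i, fun i => hFA (F.equivFin.symm i).2, fun i j hij => ?_⟩
    exact hF _ (F.equivFin.symm i).2 _ (F.equivFin.symm j).2
      (Subtype.coe_injective.ne (F.equivFin.symm.injective.ne hij))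
  · rintro ⟨v, hvA, hv⟩
    have hinj : Function.Injective v := fun i j hij =>
      by_contra fun hne => hr _ (hij ▸ hv i j hne)
    refine ⟨Finset.univ.image v, by simpa [Set.range_subset_iff] using hvA, ?_, by
      simp [Finset.card_image_of_injective _ hinj]⟩
    simp only [Finset.mem_image, Finset.mem_univ, true_and]
    rintro _ ⟨i, rfl⟩ _ ⟨j, rfl⟩ hij
    exact hv i j (ne_of_apply_ne v hij)

lemma eventually_mem_pairwiseCards_add_one_div_le {d : Y → Y → ℝ} {ε : ℝ}
    (hq : q ∈ pairwiseCards A fun y z => ε < d y z) :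
    ∀ᶠ l : ℕ in atTop, q ∈ pairwiseCards A fun y z => ε + 1 / (l : ℝ) ≤ d y z := by
  obtain ⟨F, hFA, hF, rfl⟩ := hq
  have hlim : Tendsto (fun l : ℕ => ε + 1 / (l : ℝ)) atTop (𝓝 ε) := by
    simpa using (tendsto_one_div_atTop_nhds_zero_nat (𝕜 := ℝ)).const_add ε
  have hpair : ∀ y ∈ F, ∀ z ∈ F,
      ∀ᶠ l : ℕ in atTop, y ≠ z → ε + 1 / (l : ℝ) ≤ d y z := by
    intro y hy z hz
    by_cases hyz : y = z
    · exact .of_forall fun _ h => (h hyz).elim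
    · exact (hlim.eventually_lt_const (hF y hy z hz hyz)).mono fun _ hl _ => hl.le
  filter_upwards [(eventually_all_finset F).2 fun y hy => (eventually_all_finset F).2 (hpair y hy)]
    with l hl
  exact ⟨F, hFA, hl, rfl⟩

theorem measurable_sSup_pairwiseCards {Ω : Type*} [MeasurableSpace Ω]
    [MeasurableSpace.CountablyGenerated Ω] (μ : Measure Ω) [IsFiniteMeasure μ] [μ.IsComplete]
    [TopologicalSpace Y] [PolishSpace Y] [MeasurableSpace Y] [BorelSpace Y]
    {A : Ω → Set Y} (hA : MeasurableSet {p : Ω × Y | p.2 ∈ A p.1})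
    {r : Ω → Y → Y → Prop} (hr : MeasurableSet {p : Ω × Y × Y | r p.1 p.2.1 p.2.2})
    (hirr : ∀ ω y, ¬ r ω y y) (hbdd : ∀ ω, BddAbove (pairwiseCards (A ω) (r ω))) :
    Measurable fun ω => sSup (pairwiseCards (A ω) (r ω)) := by
  refine measurable_of_Ici fun q => ?_
  have hconf : MeasurableSet {p : Ω × (Fin q → Y) |
      (∀ i, p.2 i ∈ A p.1) ∧ ∀ i j, i ≠ j → r p.1 (p.2 i) (p.2 j)} := by
    have eval i : Measurable fun p : Ω × (Fin q → Y) => p.2 i :=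
      (measurable_pi_apply i).comp measurable_snd
    refine measurableSet_setOfPred.mpr (.and (.forall fun i => ?_)
      (.forall fun i => .forall fun j => .imp measurable_const ?_))
    · exact measurableSet_setOfPred.mp (hA.preimage (measurable_fst.prodMk (eval i)))
    · exact measurableSet_setOfPred.mp
        (hr.preimage (measurable_fst.prodMk ((eval i).prodMk (eval j))))
  convert μ.measurableSet_image_fst hconf using 1
  ext ω
  simp [le_sSup_pairwiseCards_iff (hbdd ω), mem_pairwiseCards_iff_exists_fin (hirr ω)]

end PairwiseCards

lemma exists_forall_card_le_of_le_dist {α Y : Type*} [PseudoMetricSpace Y] [CompactSpace Y]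
    {δ : ℝ} (hδ : 0 < δ) :
    ∃ N : ℕ, ∀ (Φ : α → Y) (F : Finset α),
      (∀ y ∈ F, ∀ z ∈ F, y ≠ z → δ ≤ dist (Φ y) (Φ z)) → F.card ≤ N := by
  obtain ⟨C, -, hC, hcover⟩ :=
    finite_cover_balls_of_compact (isCompact_univ (X := Y)) (half_pos hδ)
  refine ⟨hC.toFinset.card, fun Φ F hF => ?_⟩
  have hcenter : ∀ y, ∃ c ∈ C, dist (Φ y) c < δ / 2 := fun y => by
    simpa using hcover (mem_univ (Φ y))
  choose c hcC hc using hcenter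
  refine Finset.card_le_card_of_injOn c (fun y _ => hC.mem_toFinset.mpr (hcC y)) ?_
  intro y hy z hz hcyz
  by_contra hyz
  have := dist_triangle_right (Φ y) (Φ z) (c z)
  linarith [hF y hy z hz hyz, hc y, hc z, hcyz ▸ hc y]

namespace PreImageRDS

variable {Ω X : Type} {ϑ : Ω → Ω} {T : Ω → X → X}

lemma measurable_Tn [MeasurableSpace Ω] [MeasurableSpace X] (hϑ : Measurable ϑ)
    (hT : Measurable fun p : Ω × X => T p.1 p.2) (m : ℕ) :
    Measurable fun p : Ω × X => Tn ϑ T m p.1 p.2 := by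
  induction m with
  | zero => exact measurable_snd
  | succ m ih => exact ih.comp ((hϑ.comp measurable_fst).prodMk hT)

variable [MetricSpace X]

lemma dn_eq_dist (n : ℕ) (ω : Ω) (y z : X) :
    dn ϑ T n ω y z =
      dist (fun i : Fin n => Tn ϑ T i ω y) (fun i : Fin n => Tn ϑ T i ω z) := by
  rw [dn, dist_pi_def, ← Finset.image_fin_univ, Finset.sup_image]
  rfl

lemma dn_self (n : ℕ) (ω : Ω) (y : X) : dn ϑ T n ω y y = 0 := by
  rw [dn_eq_dist, dist_self]

lemma measurable_dn [MeasurableSpace Ω] [MeasurableSpace X] [BorelSpace X]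
    [SecondCountableTopology X] (hϑ : Measurable ϑ)
    (hT : Measurable fun p : Ω × X => T p.1 p.2) (n : ℕ) :
    Measurable fun p : Ω × X × X => dn ϑ T n p.1 p.2.1 p.2.2 := by
  have horbit : Measurable fun p : Ω × X => fun i : Fin n => Tn ϑ T i p.1 p.2 :=
    measurable_pi_lambda _ fun i => measurable_Tn hϑ hT i
  simp only [dn_eq_dist]
  exact (horbit.comp (measurable_fst.prodMk (measurable_fst.comp measurable_snd))).dist
    (horbit.comp (measurable_fst.prodMk (measurable_snd.comp measurable_snd)))

lemma bddAbove_pairwiseCards_of_le_dn [CompactSpace X] {n : ℕ} {ω : Ω} {δ : ℝ} (hδ : 0 < δ)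
    {A : Set X} {r : X → X → Prop} (hr : ∀ y z, r y z → δ ≤ dn ϑ T n ω y z) :
    BddAbove (pairwiseCards A r) := by
  obtain ⟨N, hN⟩ := exists_forall_card_le_of_le_dist (α := X) (Y := Fin n → X) hδ
  refine ⟨N, ?_⟩
  rintro _ ⟨F, -, hF, rfl⟩
  exact hN _ F fun y hy z hz hyz =>
    dn_eq_dist (ϑ := ϑ) (T := T) n ω y z ▸ hr _ _ (hF y hy z hz hyz)

lemma measurable_sSup_pairwiseCards_preFiber [MeasurableSpace Ω]
    [MeasurableSpace.CountablyGenerated Ω] (μ : Measure Ω) [IsFiniteMeasure μ] [μ.IsComplete]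
    [CompactSpace X] [MeasurableSpace X] [BorelSpace X] (hϑ : Measurable ϑ)
    (hT : Measurable fun p : Ω × X => T p.1 p.2) {E : Set (Ω × X)} (hE : MeasurableSet E)
    (n k : ℕ) (x : X) {R : Set ℝ} (hR : MeasurableSet R) {δ : ℝ} (hδ : 0 < δ)
    (hRδ : R ⊆ Ici δ) :
    Measurable fun ω =>
      sSup (pairwiseCards (preFiber ϑ T E k x ω) fun y z => dn ϑ T n ω y z ∈ R) :=
  measurable_sSup_pairwiseCards μ (A := preFiber ϑ T E k x)
    (r := fun ω y z => dn ϑ T n ω y z ∈ R)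
    (hE.inter (measurable_Tn hϑ hT k (measurableSet_singleton x))) (measurable_dn hϑ hT n hR)
    (fun ω y hy => absurd (hRδ hy) (by rw [mem_Ici, dn_self, not_le]; exact hδ))
    fun _ => bddAbove_pairwiseCards_of_le_dn hδ fun _ _ h => hRδ h

theorem sepMaxCard_measurable_of_approx_general
    {Ω : Type} [MeasurableSpace Ω] {X : Type} [MetricSpace X] [CompactSpace X]
    [MeasurableSpace X] [BorelSpace X]
    (P : Measure Ω) [IsProbabilityMeasure P]
    -- `F` is complete, countably generated and separates points
    (hcomplete : ∀ s t : Set Ω, MeasurableSet t → P t = 0 → s ⊆ t → MeasurableSet s)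
    [MeasurableSpace.CountablyGenerated Ω]
    -- `ϑ` is an invertible `P`-preserving transformation
    (ϑ : Ω → Ω) (hϑ : MeasurePreserving ϑ P P)
    -- `E` is measurable with compact fibers
    (E : Set (Ω × X)) (hE : MeasurableSet E)
    -- `T` is a continuous bundle RDS on `E`
    (T : Ω → X → X)
    (hTmeas : Measurable fun p : Ω × X => T p.1 p.2)
    (x : X) (k n : ℕ) (ε : ℝ) (hε : 0 < ε) :
    (∀ l : ℕ, 1 ≤ l → Measurable fun ω => sepMaxCardGe ϑ T E n k ε l x ω) ∧
    Measurable (fun ω => sepMaxCard ϑ T E n k ε x ω) ∧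
    (∀ ω : Ω, ∀ l l' : ℕ, 1 ≤ l → l ≤ l' →
      sepMaxCardGe ϑ T E n k ε l x ω ≤ sepMaxCardGe ϑ T E n k ε l' x ω) ∧
    (∀ ω : Ω, ∀ l : ℕ, 1 ≤ l →
      sepMaxCardGe ϑ T E n k ε l x ω ≤ sepMaxCard ϑ T E n k ε x ω) ∧
    (∀ ω : Ω, ∃ L : ℕ, 1 ≤ L ∧ ∀ l ≥ L,
      sepMaxCardGe ϑ T E n k ε l x ω = sepMaxCard ϑ T E n k ε x ω) := by
  have : P.IsComplete := ⟨fun s hs => hcomplete s _ (measurableSet_toMeasurable P s)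
    (by rwa [measure_toMeasurable]) (subset_toMeasurable P s)⟩
  have hmeas : ∀ {R : Set ℝ}, MeasurableSet R → R ⊆ Ici ε → Measurable fun ω =>
      sSup (pairwiseCards (preFiber ϑ T E k x ω) fun y z => dn ϑ T n ω y z ∈ R) :=
    fun hR hRε =>
      measurable_sSup_pairwiseCards_preFiber P hϑ.measurable hTmeas hE n k x hR hε hRε
  have hbdd : ∀ ω {r : X → X → Prop}, (∀ y z, r y z → ε ≤ dn ϑ T n ω y z) →
      BddAbove (pairwiseCards (preFiber ϑ T E k x ω) r) :=
    fun _ _ => bddAbove_pairwiseCards_of_le_dn hε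
  have hbddGe : ∀ ω (l : ℕ), BddAbove (pairwiseCards (preFiber ϑ T E k x ω)
      fun y z => ε + 1 / (l : ℝ) ≤ dn ϑ T n ω y z) :=
    fun ω l => hbdd ω fun _ _ h => le_of_add_le_of_nonneg_left h (by positivity)
  have hGe_le : ∀ ω (l : ℕ), 1 ≤ l →
      sepMaxCardGe ϑ T E n k ε l x ω ≤ sepMaxCard ϑ T E n k ε x ω := fun ω l hl =>
    sSup_pairwiseCards_mono (hbdd ω fun _ _ h => h.le) fun _ _ h =>
      lt_of_lt_of_le (lt_add_of_pos_right ε (by positivity)) h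
  refine ⟨fun l _ => hmeas measurableSet_Ici (Ici_subset_Ici.2 (by simp)),
    hmeas measurableSet_Ioi Ioi_subset_Ici_self, fun ω l l' hl hll' => ?_, hGe_le, fun ω => ?_⟩
  · exact sSup_pairwiseCards_mono (hbddGe ω l') fun _ _ h => le_trans (by gcongr) h
  · obtain ⟨L, hL⟩ := eventually_atTop.mp (eventually_mem_pairwiseCards_add_one_div_le
      (Nat.sSup_mem ⟨0, zero_mem_pairwiseCards⟩ (hbdd ω fun _ _ h => h.le)))
    exact ⟨L + 1, le_add_self, fun l hl =>
      (hGe_le ω l (by omega)).antisymm (le_csSup (hbddGe ω l) (hL l (by omega)))⟩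

/-- Measurability of `t_{n,l}(·,ε)` and `s_n(·,ε)`, and `t_{n,l} ↑ s_n` as `l → ∞`,
    with `t_{n,l}(ω,ε) = s_n(ω,ε)` for all large `l` (for each fixed `ω`). -/
theorem sepMaxCard_measurable_of_approx
    {Ω : Type} [MeasurableSpace Ω] {X : Type} [MetricSpace X] [CompactSpace X]
    [MeasurableSpace X] [BorelSpace X]
    (P : Measure Ω) [IsProbabilityMeasure P]
    -- `F` is complete, countably generated and separates points
    (hcomplete : ∀ s t : Set Ω, MeasurableSet t → P t = 0 → s ⊆ t → MeasurableSet s)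
    [MeasurableSpace.CountablyGenerated Ω]
    (hsepPts : ∀ ω₁ ω₂ : Ω, ω₁ ≠ ω₂ → ∃ s : Set Ω, MeasurableSet s ∧ ω₁ ∈ s ∧ ω₂ ∉ s)
    -- `ϑ` is an invertible `P`-preserving transformation
    (ϑ : Ω → Ω) (hϑ : MeasurePreserving ϑ P P) (hϑbij : Function.Bijective ϑ)
    -- `E` is measurable with compact fibers
    (E : Set (Ω × X)) (hE : MeasurableSet E) (hEcomp : ∀ ω, IsCompact (fiber E ω))
    -- `T` is a continuous bundle RDS on `E`
    (T : Ω → X → X) (hTmap : ∀ ω, MapsTo (T ω) (fiber E ω) (fiber E (ϑ ω)))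
    (hTmeas : Measurable fun p : Ω × X => T p.1 p.2)
    (hTcont : ∀ᵐ ω ∂P, ContinuousOn (T ω) (fiber E ω))
    (x : X) (hx : x ∈ XE E) (k n : ℕ) (hk : n ≤ k) (ε : ℝ) (hε : 0 < ε) :
    (∀ l : ℕ, 1 ≤ l → Measurable fun ω => sepMaxCardGe ϑ T E n k ε l x ω) ∧
    Measurable (fun ω => sepMaxCard ϑ T E n k ε x ω) ∧
    (∀ ω : Ω, ∀ l l' : ℕ, 1 ≤ l → l ≤ l' →
      sepMaxCardGe ϑ T E n k ε l x ω ≤ sepMaxCardGe ϑ T E n k ε l' x ω) ∧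
    (∀ ω : Ω, ∀ l : ℕ, 1 ≤ l →
      sepMaxCardGe ϑ T E n k ε l x ω ≤ sepMaxCard ϑ T E n k ε x ω) ∧
    (∀ ω : Ω, ∃ L : ℕ, 1 ≤ L ∧ ∀ l ≥ L,
      sepMaxCardGe ϑ T E n k ε l x ω = sepMaxCard ϑ T E n k ε x ω) :=
  sepMaxCard_measurable_of_approx_general P hcomplete ϑ hϑ E hE T hTmeas x k n ε hε

end PreImageRDS
end

section
/- Let (Y,d) be a compact metric space, S : Y → Y continuous, and {Q_0,Q_1,…,Q_k} a finite partition of Y such that the cover η = {Q_0∪Q_1, …, Q_0∪Q_k} has Lebesgue number τ. Let 0 < 4δ < τ and n ∈ ℕ, and set d_n(y,z) = max_{0≤i<n} d(S^i y,S^i z). If x, x̃ ∈ Y satisfy d_n(x,x̃) < 4δ, then for each 0 ≤ i < n the points S^i x and S^i x̃ lie in a common element of η. Consequently, for any fixed point y ∈ Y, the number of elements C of the partition ⋁_{i=0}^{n-1} S^{-i}{Q_0,…,Q_k} whose closure contains a point x with d_n(x,y) < 2δ is at most 2^n. -/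
open Set

namespace PreImageCounting

/-- The Bowen metric `d_n(y,z) = max_{0 ≤ i < n} d(S^i y, S^i z)`. -/
noncomputable def dn {Y : Type} [MetricSpace Y] (S : Y → Y) (n : ℕ) (y z : Y) : ℝ :=
  ((Finset.range n).sup fun i => nndist (S^[i] y) (S^[i] z) : NNReal)

/-- The key counting estimate in the lower bound of the pre-image variational principle:
    if the cover `η = {Q_0 ∪ Q_1, …, Q_0 ∪ Q_k}` has Lebesgue number `τ` and `0 < 4δ < τ`,
    then (i) any two points `4δ`-close in the Bowen metric `d_n` visit common elements of
    `η` during the first `n` iterates, and (ii) for a fixed `y`, at most `2^n` elements of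
    `⋁_{i<n} S^{-i}{Q_0,…,Q_k}` have a point `x` in their closure with `d_n(x,y) < 2δ`. -/
theorem card_refinement_near_le_two_pow
    {Y : Type} [MetricSpace Y] [CompactSpace Y] (S : Y → Y) (hS : Continuous S)
    (k : ℕ) (Q : Fin (k + 1) → Set Y)
    (hdisj : ∀ i j, i ≠ j → Disjoint (Q i) (Q j)) (hcover : (⋃ i, Q i) = univ)
    (τ : ℝ) (hτpos : 0 < τ)
    -- `τ` is a Lebesgue number of the cover `η = {Q_0 ∪ Q_j : 1 ≤ j ≤ k}`
    (hLeb : ∀ A : Set Y, Metric.diam A ≤ τ → ∃ j : Fin k, A ⊆ Q 0 ∪ Q j.succ)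
    (δ : ℝ) (hδ : 0 < δ) (hδτ : 4 * δ < τ) (n : ℕ) :
    (∀ x x' : Y, dn S n x x' < 4 * δ → ∀ i < n, ∃ j : Fin k,
      S^[i] x ∈ Q 0 ∪ Q j.succ ∧ S^[i] x' ∈ Q 0 ∪ Q j.succ) ∧
    ∀ y : Y,
      Set.ncard {j : Fin n → Fin (k + 1) |
        ∃ x ∈ closure (⋂ i : Fin n, S^[(i : ℕ)] ⁻¹' Q (j i)), dn S n x y < 2 * δ}
      ≤ 2 ^ n := by
  have hdn : ∀ (x z : Y) (i : ℕ), i < n → dist (S^[i] x) (S^[i] z) ≤ dn S n x z := by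
    intro x z i hi
    have : (nndist (S^[i] x) (S^[i] z) : NNReal) ≤
        (Finset.range n).sup fun i => nndist (S^[i] x) (S^[i] z) :=
      Finset.le_sup (f := fun i => nndist (S^[i] x) (S^[i] z)) (Finset.mem_range.mpr hi)
    exact_mod_cast this
  constructor
  · intro x x' h i hi
    have hd : dist (S^[i] x) (S^[i] x') < 4 * δ := lt_of_le_of_lt (hdn x x' i hi) h
    obtain ⟨j, hj⟩ := hLeb {S^[i] x, S^[i] x'} (by
      rw [Metric.diam_pair]
      exact le_of_lt (hd.trans hδτ))
    exact ⟨j, hj (by simp), hj (by simp)⟩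
  · intro y
    have hσ : ∀ i : Fin n, ∃ jj : Fin k,
        Metric.closedBall (S^[(i : ℕ)] y) (2 * δ) ⊆ Q 0 ∪ Q jj.succ := by
      intro i
      apply hLeb
      calc Metric.diam (Metric.closedBall (S^[(i : ℕ)] y) (2 * δ)) ≤ 2 * (2 * δ) :=
            Metric.diam_closedBall (by linarith)
        _ ≤ τ := by linarith
    choose σ hσ using hσ
    set T : Set (Fin n → Fin (k + 1)) := {j : Fin n → Fin (k + 1) |
        ∃ x ∈ closure (⋂ i : Fin n, S^[(i : ℕ)] ⁻¹' Q (j i)), dn S n x y < 2 * δ} with hT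
    have key : ∀ j ∈ T, ∀ i : Fin n, j i = 0 ∨ j i = (σ i).succ := by
      rintro j ⟨x, hx, hxy⟩ i
      by_contra hc
      push_neg at hc
      obtain ⟨h0, hs⟩ := hc
      set U : Set Y := (fun z => dist (S^[(i : ℕ)] z) (S^[(i : ℕ)] y)) ⁻¹' Set.Iio (2 * δ)
        with hU
      have hUopen : IsOpen U :=
        (Continuous.dist (hS.iterate i) continuous_const).isOpen_preimage _ isOpen_Iio
      have hxU : x ∈ U := by
        simp only [hU, Set.mem_preimage, Set.mem_Iio]
        exact lt_of_le_of_lt (hdn x y i i.isLt) hxy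
      obtain ⟨x', hx'U, hx'T⟩ := _root_.mem_closure_iff.mp hx U hUopen hxU
      have h1 : S^[(i : ℕ)] x' ∈ Q (j i) := by
        have := Set.mem_iInter.mp hx'T i
        exact this
      have h2 : S^[(i : ℕ)] x' ∈ Q 0 ∪ Q (σ i).succ := by
        apply hσ i
        simp only [Metric.mem_closedBall]
        exact le_of_lt hx'U
      rcases h2 with h2 | h2
      · exact absurd rfl ((hdisj (j i) 0 h0).ne_of_mem h1 h2)
      · exact absurd rfl ((hdisj (j i) ((σ i).succ) hs).ne_of_mem h1 h2)
    have hinj : Set.InjOn (fun (j : Fin n → Fin (k + 1)) => fun i => decide (j i = 0)) T := by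
      intro j hj j' hj' h
      funext i
      have hi := congrFun h i
      simp only [decide_eq_decide] at hi
      rcases key j hj i with h1 | h1
      · rw [h1, ((hi.mp h1) : j' i = 0)]
      · rcases key j' hj' i with h2 | h2
        · exact absurd (hi.mpr h2) (by rw [h1]; exact Fin.succ_ne_zero _)
        · rw [h1, h2]
    calc T.ncard ≤ (Set.univ : Set (Fin n → Bool)).ncard :=
          Set.ncard_le_ncard_of_injOn _ (fun a _ => Set.mem_univ _) hinj (Set.finite_univ)
      _ = 2 ^ n := by
          rw [Set.ncard_univ, Nat.card_eq_fintype_card]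
          simp

end PreImageCounting
end

section
/- Let (Y,Σ,m) be a probability space, g : Y → ℝ a bounded measurable function, α = {A_1,…,A_r} a finite measurable partition of Y, and β a finite measurable partition of Y. Then H_m(α | β) + ∫ g dm ≤ max_{B∈β, m(B)>0} log Σ_{A∈α, m(A∩B)>0} exp( sup_{y∈A∩B} g(y) ), where H_m(α|β) = Σ_{B∈β} m(B) H_{m_B}(α) with m_B the conditional measure of m on B. -/
/-!
Split `Y` into the cells `A i ∩ B j`. On each cell `g` is at most its supremum `a i j`, so on a
fibre `B j` of positive measure the left-hand side contributes at most
`m(B j) · ∑ i, p i (a i j - log p i)` with `p i = m(A i ∩ B j) / m(B j)`. Gibbs' inequality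
`∑ pᵢ (aᵢ - log pᵢ) ≤ log ∑ exp aᵢ` bounds this by `m(B j)` times the `j`-th candidate for the
maximum, and averaging over `j` with weights `m(B j)` gives the claim.
-/

open MeasureTheory Set Function

namespace PreImageCondEntropyBound

theorem sum_mul_sub_log_le_log_sum_exp {ι : Type*} (t : Finset ι) {p : ι → ℝ} (a : ι → ℝ)
    (hp : ∀ i ∈ t, 0 < p i) (hsum : ∑ i ∈ t, p i = 1) :
    ∑ i ∈ t, p i * (a i - Real.log (p i)) ≤ Real.log (∑ i ∈ t, Real.exp (a i)) := by
  have jensen := strictConcaveOn_log_Ioi.concaveOn.le_map_sum (fun i hi => (hp i hi).le) hsum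
    (p := fun i => Real.exp (a i) / p i) fun i hi => div_pos (Real.exp_pos _) (hp i hi)
  have hlog : ∀ i ∈ t, p i • Real.log (Real.exp (a i) / p i) = p i * (a i - Real.log (p i)) :=
    fun i hi => by rw [smul_eq_mul, Real.log_div (Real.exp_ne_zero _) (hp i hi).ne', Real.log_exp]
  have hexp : ∀ i ∈ t, p i • (Real.exp (a i) / p i) = Real.exp (a i) :=
    fun i hi => by rw [smul_eq_mul, mul_div_cancel₀ _ (hp i hi).ne']
  rwa [Finset.sum_congr rfl hlog, Finset.sum_congr rfl hexp] at jensen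

theorem sum_mul_sub_log_div_le_mul_log_sum_exp {ι : Type*} (t : Finset ι) {p : ι → ℝ}
    (a : ι → ℝ) (hp : ∀ i ∈ t, 0 ≤ p i) :
    ∑ i ∈ t, p i * (a i - Real.log (p i / ∑ k ∈ t, p k))
      ≤ (∑ i ∈ t, p i) * Real.log (∑ i ∈ t with 0 < p i, Real.exp (a i)) := by
  set q := ∑ k ∈ t, p k
  have hq0 : 0 ≤ q := Finset.sum_nonneg hp
  rcases hq0.eq_or_lt with hq | hq
  · have hzero : ∀ i ∈ t, p i = 0 := (Finset.sum_eq_zero_iff_of_nonneg hp).mp hq.symm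
    rw [← hq, zero_mul]
    exact (Finset.sum_eq_zero fun i hi => by rw [hzero i hi, zero_mul]).le
  have hfilter : ∀ f : ι → ℝ, ∑ i ∈ t with 0 < p i, p i * f i = ∑ i ∈ t, p i * f i :=
    fun f => Finset.sum_filter_of_ne fun i hi hne =>
      (hp i hi).lt_of_ne (left_ne_zero_of_mul hne).symm
  have hnorm : ∑ i ∈ t with 0 < p i, p i / q = 1 := by
    rw [← Finset.sum_div, div_eq_one_iff_eq hq.ne']
    simpa using hfilter fun _ => 1
  have gibbs := sum_mul_sub_log_le_log_sum_exp _ a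
    (fun i hi => div_pos (Finset.mem_filter.mp hi).2 hq) hnorm
  calc ∑ i ∈ t, p i * (a i - Real.log (p i / q))
      = q * ∑ i ∈ t with 0 < p i, p i / q * (a i - Real.log (p i / q)) := by
        rw [Finset.mul_sum, ← hfilter]
        exact Finset.sum_congr rfl fun i _ => by field_simp
    _ ≤ q * Real.log (∑ i ∈ t with 0 < p i, Real.exp (a i)) := by gcongr

section Partition

variable {Y ι : Type*} [MeasurableSpace Y]

structure IsMeasurablePartition (A : ι → Set Y) : Prop where
  measurableSet : ∀ i, MeasurableSet (A i)
  pairwise_disjoint : Pairwise (Disjoint on A)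
  iUnion_eq_univ : ⋃ i, A i = univ

namespace IsMeasurablePartition

variable {A : ι → Set Y}

theorem inter {κ : Type*} {B : κ → Set Y} (hA : IsMeasurablePartition A)
    (hB : IsMeasurablePartition B) :
    IsMeasurablePartition fun p : ι × κ => A p.1 ∩ B p.2 where
  measurableSet p := (hA.measurableSet p.1).inter (hB.measurableSet p.2)
  pairwise_disjoint := by
    rintro ⟨i, j⟩ ⟨i', j'⟩ hne
    rcases eq_or_ne i i' with rfl | hi
    · exact (hB.pairwise_disjoint fun hj => hne (Prod.ext rfl hj)).mono
        inter_subset_right inter_subset_right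
    · exact (hA.pairwise_disjoint hi).mono inter_subset_left inter_subset_left
  iUnion_eq_univ := by
    simp only [iUnion_prod', ← inter_iUnion, hA.iUnion_eq_univ,
      hB.iUnion_eq_univ, inter_univ]

variable [Fintype ι] {m : Measure Y}

theorem integral_eq_sum (hA : IsMeasurablePartition A) {f : Y → ℝ} (hf : Integrable f m) :
    ∫ y, f y ∂m = ∑ i, ∫ y in A i, f y ∂m := by
  rw [← integral_iUnion_fintype hA.measurableSet hA.pairwise_disjoint fun _ => hf.integrableOn,
    hA.iUnion_eq_univ, Measure.restrict_univ]

theorem sum_measureReal_inter [IsFiniteMeasure m] (hA : IsMeasurablePartition A) {s : Set Y}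
    (hs : MeasurableSet s) :
    ∑ i, m.real (A i ∩ s) = m.real s := by
  rw [← measureReal_iUnion_fintype]
  · rw [← iUnion_inter, hA.iUnion_eq_univ, univ_inter]
  · exact fun i i' hi => (hA.pairwise_disjoint hi).mono inter_subset_left inter_subset_left
  · exact fun i => (hA.measurableSet i).inter hs

theorem sum_measureReal [IsProbabilityMeasure m] (hA : IsMeasurablePartition A) :
    ∑ i, m.real (A i) = 1 := by
  simpa using hA.sum_measureReal_inter (m := m) MeasurableSet.univ

theorem sum_measureReal_mul_le [IsProbabilityMeasure m] (hA : IsMeasurablePartition A)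
    {L : ι → ℝ} {M : ℝ} (hL : ∀ i, 0 < m (A i) → L i ≤ M) :
    ∑ i, m.real (A i) * L i ≤ M := by
  calc ∑ i, m.real (A i) * L i ≤ ∑ i, m.real (A i) * M := by
        refine Finset.sum_le_sum fun i _ => ?_
        rcases eq_zero_or_pos (m (A i)) with h | h
        · simp [measureReal_def, h]
        · exact mul_le_mul_of_nonneg_left (hL i h) measureReal_nonneg
    _ = M := by rw [← Finset.sum_mul, hA.sum_measureReal, one_mul]

end IsMeasurablePartition

theorem setIntegral_le_measureReal_mul_sSup_image {m : Measure Y} [IsFiniteMeasure m]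
    {g : Y → ℝ} {s : Set Y} (hs : MeasurableSet s) (hg : IntegrableOn g s m)
    (hbdd : BddAbove (g '' s)) :
    ∫ y in s, g y ∂m ≤ m.real s * sSup (g '' s) := by
  calc ∫ y in s, g y ∂m ≤ ∫ _ in s, sSup (g '' s) ∂m :=
        setIntegral_mono_on hg (integrableOn_const (measure_ne_top m s)) hs
          fun y hy => le_csSup hbdd (mem_image_of_mem g hy)
    _ = m.real s * sSup (g '' s) := by rw [setIntegral_const, smul_eq_mul]

theorem sum_neg_mul_log_add_setIntegral_le [Fintype ι] {m : Measure Y} [IsFiniteMeasure m]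
    {A : ι → Set Y} (hA : IsMeasurablePartition A) {B : Set Y} (hB : MeasurableSet B)
    {g : Y → ℝ} (hg : Integrable g m) (hbdd : BddAbove (range g)) :
    ∑ i, (-(m.real (A i ∩ B) * Real.log (m.real (A i ∩ B) / m.real B))
        + ∫ y in A i ∩ B, g y ∂m)
      ≤ m.real B * Real.log (∑ i with 0 < m.real (A i ∩ B),
          Real.exp (sSup (g '' (A i ∩ B)))) := by
  have hcell : ∀ i, ∫ y in A i ∩ B, g y ∂m ≤ m.real (A i ∩ B) * sSup (g '' (A i ∩ B)) :=
    fun i => setIntegral_le_measureReal_mul_sSup_image ((hA.measurableSet i).inter hB)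
      hg.integrableOn (hbdd.mono (image_subset_range g _))
  have gibbs := sum_mul_sub_log_div_le_mul_log_sum_exp Finset.univ
    (fun i => sSup (g '' (A i ∩ B))) fun i _ => measureReal_nonneg (μ := m) (s := A i ∩ B)
  rw [hA.sum_measureReal_inter hB] at gibbs
  refine le_trans (Finset.sum_le_sum fun i _ => ?_) gibbs
  linarith [hcell i]

end Partition

/-- The basic estimate: for a probability space `(Y,Σ,m)`, a bounded measurable `g`, and
    finite measurable partitions `α = {A_i}` and `β = {B_j}` of `Y`,
    `H_m(α|β) + ∫ g dm ≤ max_{B ∈ β, m(B)>0} log ∑_{A ∈ α, m(A∩B)>0} exp(sup_{A∩B} g)`,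
    where `H_m(α|β) = −∑_{i,j} m(A_i∩B_j) log (m(A_i∩B_j)/m(B_j))`. -/
theorem condEntropy_add_integral_le
    {Y : Type} [MeasurableSpace Y] (m : Measure Y) [IsProbabilityMeasure m]
    (g : Y → ℝ) (hgmeas : Measurable g) (hgbdd : ∃ C : ℝ, ∀ y, |g y| ≤ C)
    {ι κ : Type} [Fintype ι] [Fintype κ] (A : ι → Set Y) (B : κ → Set Y)
    (hAmeas : ∀ i, MeasurableSet (A i)) (hAdisj : ∀ i i', i ≠ i' → Disjoint (A i) (A i'))
    (hAcover : (⋃ i, A i) = univ)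
    (hBmeas : ∀ j, MeasurableSet (B j)) (hBdisj : ∀ j j', j ≠ j' → Disjoint (B j) (B j'))
    (hBcover : (⋃ j, B j) = univ) :
    (- ∑ j, ∑ i, (m (A i ∩ B j)).toReal *
        Real.log ((m (A i ∩ B j)).toReal / (m (B j)).toReal)) + ∫ y, g y ∂m
      ≤ sSup {r : ℝ | ∃ j : κ, 0 < m (B j) ∧
          r = Real.log (∑ i, Set.indicator {i : ι | 0 < m (A i ∩ B j)}
            (fun i => Real.exp (sSup (g '' (A i ∩ B j)))) i)} := by
  classical
  obtain ⟨C, hC⟩ := hgbdd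
  have hg : Integrable g m := .of_bound hgmeas.aestronglyMeasurable C (ae_of_all _ hC)
  have hbdd : BddAbove (range g) := ⟨C, forall_mem_range.mpr fun y => (abs_le.mp (hC y)).2⟩
  have hA : IsMeasurablePartition A := ⟨hAmeas, hAdisj, hAcover⟩
  have hB : IsMeasurablePartition B := ⟨hBmeas, hBdisj, hBcover⟩
  set S := {r : ℝ | ∃ j : κ, 0 < m (B j) ∧ _}
  set L : κ → ℝ := fun j => Real.log (∑ i, Set.indicator {i : ι | 0 < m (A i ∩ B j)}
    (fun i => Real.exp (sSup (g '' (A i ∩ B j)))) i)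
  have hSbdd : BddAbove S :=
    (finite_range L).bddAbove.mono (by rintro _ ⟨j, -, rfl⟩; exact ⟨j, rfl⟩)
  have hfiber : ∀ j, ∑ i, (-(m.real (A i ∩ B j) * Real.log (m.real (A i ∩ B j) / m.real (B j)))
      + ∫ y in A i ∩ B j, g y ∂m) ≤ m.real (B j) * L j := fun j => by
    convert sum_neg_mul_log_add_setIntegral_le hA (hB.measurableSet j) hg hbdd using 3
    rw [Finset.sum_filter]
    simp [indicator_apply, measureReal_def, ENNReal.toReal_pos_iff, measure_lt_top]
  calc _ = ∑ j, ∑ i, (-(m.real (A i ∩ B j) * Real.log (m.real (A i ∩ B j) / m.real (B j)))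
        + ∫ y in A i ∩ B j, g y ∂m) := by
        rw [(hA.inter hB).integral_eq_sum hg, Fintype.sum_prod_type_right]
        simp only [Finset.sum_add_distrib, Finset.sum_neg_distrib, measureReal_def]
    _ ≤ ∑ j, m.real (B j) * L j := Finset.sum_le_sum fun j _ => hfiber j
    _ ≤ sSup S := hB.sum_measureReal_mul_le fun j hj => le_csSup hSbdd ⟨j, hj, rfl⟩

end PreImageCondEntropyBound
end
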